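/- If there are multiple digests d_1,...,d_t with t ≥ 2 such that for each k, the likelihood L_k = Σ_j (2c_{k,j} − C_j)·C_j exceeds a threshold T > 0, where C_j = Σ_k c_{k,j} and all c_{k,j} ≥ 0, then a contradiction follows. Hence at most one likelihood can exceed a positive threshold; i.e., MiRACLE can terminate with only a single solution being adjudged correct. -/

import Mathlib

/-!
Two distinct digests `a ≠ b` share each round's total: `c a j + c b j ≤ C j`, so in every round
`(2 c_a − C) C + (2 c_b − C) C = 2 (c_a + c_b − C) C ≤ 0`. Hence `L_a + L_b ≤ 0 < 2 T`.
-/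

open Finset

theorem Finset.add_le_sum_of_ne {ι M : Type*} [AddCommMonoid M] [PartialOrder M]
    [IsOrderedAddMonoid M] {s : Finset ι} {f : ι → M} (hf : ∀ k ∈ s, 0 ≤ f k) {a b : ι}
    (ha : a ∈ s) (hb : b ∈ s) (hab : a ≠ b) :
    f a + f b ≤ ∑ k ∈ s, f k := by
  classical
  rw [← sum_pair hab]
  exact sum_le_sum_of_subset_of_nonneg (insert_subset ha (singleton_subset_iff.mpr hb))
    fun k hk _ => hf k hk

theorem round_likelihood_add_nonpos {x y C : ℝ} (hxy : x + y ≤ C) (hC : 0 ≤ C) :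
    (2 * x - C) * C + (2 * y - C) * C ≤ 0 := by
  have hfactor : (2 * x - C) * C + (2 * y - C) * C = 2 * ((x + y - C) * C) := by ring
  have hround : (x + y - C) * C ≤ 0 := mul_nonpos_of_nonpos_of_nonneg (sub_nonpos.mpr hxy) hC
  linarith

theorem likelihood_add_nonpos {ι κ : Type*} [Fintype ι] [Fintype κ] {c : ι → κ → ℝ}
    (hc : ∀ k j, 0 ≤ c k j) {C : κ → ℝ} (hC : ∀ j, C j = ∑ k, c k j) {a b : ι} (hab : a ≠ b) :
    (∑ j, (2 * c a j - C j) * C j) + ∑ j, (2 * c b j - C j) * C j ≤ 0 := by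
  rw [← sum_add_distrib]
  refine sum_nonpos fun j _ => round_likelihood_add_nonpos ?_ ?_
  · rw [hC]
    exact add_le_sum_of_ne (fun k _ => hc k j) (mem_univ a) (mem_univ b) hab
  · rw [hC]
    exact sum_nonneg fun k _ => hc k j

/-- MiRACLE can terminate with only a single solution: if `t ≥ 2` digests all have
likelihood `L_k = Σ_j (2 c_{k,j} − C_j) C_j` exceeding a threshold `T > 0`, where
`C_j = Σ_k c_{k,j}` and all counts are nonnegative, a contradiction follows. -/
theorem miracle_single_solution (m i : ℕ) (c : Fin m → Fin i → ℝ)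
    (hc : ∀ k j, 0 ≤ c k j) (C : Fin i → ℝ) (hC : ∀ j, C j = ∑ k, c k j)
    (T : ℝ) (hT : 0 < T) (s : Finset (Fin m)) (hs : 2 ≤ s.card)
    (hL : ∀ k ∈ s, T < ∑ j, (2 * c k j - C j) * C j) :
    False := by
  obtain ⟨a, ha, b, hb, hab⟩ := one_lt_card.mp hs
  have hsum := likelihood_add_nonpos hc hC hab
  linarith [hL a ha, hL b hb]
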